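/- If σ² < 2π, the equilibrium threshold τ*(γ), defined implicitly by Δ(τ*(γ), γ) = 0, is strictly decreasing in γ on (0,1). -/

import Mathlib

open MeasureTheory ProbabilityTheory Filter

noncomputable def stdPDF (x : ℝ) : ℝ := (Real.sqrt (2 * Real.pi))⁻¹ * Real.exp (-x ^ 2 / 2)

noncomputable def stdCDF (x : ℝ) : ℝ := ∫ t in Set.Iic x, stdPDF t

/-- Posterior density of Θ given Y = τ: Gaussian with mean ατ, variance ασ², α = 1/(1+σ²). -/
noncomputable def postPDF (σ τ θ : ℝ) : ℝ :=
  (Real.sqrt ((1 / (1 + σ ^ 2)) * σ ^ 2))⁻¹ *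
    stdPDF ((θ - (1 / (1 + σ ^ 2)) * τ) / Real.sqrt ((1 / (1 + σ ^ 2)) * σ ^ 2))

/-- Two-stage indifference function. -/
noncomputable def Δ₂ (σ γ τ : ℝ) : ℝ :=
  (∫ θ in Set.Iic (1 : ℝ), (1 - γ) * (1 - θ) * postPDF σ τ θ) +
    ∫ θ in Set.Ioi (1 : ℝ), (stdCDF ((τ - θ) / σ) - θ) * postPDF σ τ θ

/-- Single-stage indifference function. -/
noncomputable def Δ₁ (σ τ : ℝ) : ℝ :=
  ∫ θ, (stdCDF ((τ - θ) / σ) - θ) * postPDF σ τ θ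

/-- First-stage participation fraction. -/
noncomputable def F1 (σ τ θ : ℝ) : ℝ := stdCDF ((τ - θ) / σ)

/-- Two-stage welfare. -/
noncomputable def W₂ (σ γ τ : ℝ) : ℝ :=
  (∫ θ in Set.Iic (1 : ℝ), (F1 σ τ θ + γ * (1 - F1 σ τ θ)) * (1 - θ) * stdPDF θ) +
    ∫ θ in Set.Ioi (1 : ℝ), F1 σ τ θ * (F1 σ τ θ - θ) * stdPDF θ

/-- Single-stage welfare. -/
noncomputable def W₁ (σ τ : ℝ) : ℝ :=
  ∫ θ, F1 σ τ θ * (F1 σ τ θ - θ) * stdPDF θ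

/-- Marginal density of Y = Θ + Z. -/
noncomputable def fY (σ τ : ℝ) : ℝ :=
  (Real.sqrt (1 + σ ^ 2))⁻¹ * stdPDF (τ / Real.sqrt (1 + σ ^ 2))

/-!
Given the signal τ, the posterior of θ is `N(ατ, ασ²)` with `α = 1 / (1 + σ²)`, and `Δ₂ σ γ τ` is
the posterior expectation of the payoff `g(θ) = (1 - γ)(1 - θ)` for `θ ≤ 1`,
`g(θ) = Φ((τ - θ)/σ) - θ` for `θ > 1`.

The parameter γ only enters through the factor `1 - γ` on `θ ≤ 1`, an event of positive posterior
probability, so `Δ₂` is strictly decreasing in γ. Writing `θ = x + ατ` with `x ~ N(0, ασ²)` moves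
the dependence on τ into the payoff: at fixed `x`, raising τ raises θ at rate `α` but the argument
of `Φ` only at rate `σα`, and `Φ` has slope at most `1/√(2π)`. Hence `σ² < 2π` makes the payoff,
and so `Δ₂`, strictly decreasing in τ. If now `γ₁ < γ₂` but `τ*(γ₁) ≤ τ*(γ₂)`, then
`0 = Δ₂(γ₂, τ*(γ₂)) ≤ Δ₂(γ₂, τ*(γ₁)) < Δ₂(γ₁, τ*(γ₁)) = 0`.
-/

open scoped NNReal
open Set

lemma stdPDF_eq_gaussianPDFReal : stdPDF = gaussianPDFReal 0 1 := by
  ext x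
  simp [stdPDF, gaussianPDFReal]

lemma stdCDF_eq_cdf : stdCDF = cdf (gaussianReal 0 1) := by
  ext x
  rw [cdf_eq_real, measureReal_def, gaussianReal_apply_eq_integral _ one_ne_zero,
    ENNReal.toReal_ofReal (setIntegral_nonneg measurableSet_Iic
      fun t _ => gaussianPDFReal_nonneg 0 1 t), stdCDF, stdPDF_eq_gaussianPDFReal]

lemma stdPDF_le (x : ℝ) : stdPDF x ≤ (√(2 * Real.pi))⁻¹ :=
  mul_le_of_le_one_right (by positivity) (Real.exp_le_one_iff.2 (by nlinarith [sq_nonneg x]))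

lemma stdCDF_sub_le {a b : ℝ} (hab : a ≤ b) :
    stdCDF b - stdCDF a ≤ (b - a) / √(2 * Real.pi) := by
  have hint : Integrable stdPDF := by
    rw [stdPDF_eq_gaussianPDFReal]; exact integrable_gaussianPDFReal 0 1
  calc stdCDF b - stdCDF a = ∫ t in a..b, stdPDF t :=
        intervalIntegral.integral_Iic_sub_Iic hint.integrableOn hint.integrableOn
    _ ≤ ∫ _ in a..b, (√(2 * Real.pi))⁻¹ :=
        intervalIntegral.integral_mono_on hab hint.intervalIntegrable
          intervalIntegrable_const fun t _ => stdPDF_le t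
    _ = (b - a) / √(2 * Real.pi) := by
        rw [intervalIntegral.integral_const, smul_eq_mul, div_eq_mul_inv]

lemma measurable_stdCDF : Measurable stdCDF :=
  stdCDF_eq_cdf ▸ (cdf (gaussianReal 0 1)).mono.measurable

lemma abs_stdCDF_le_one (x : ℝ) : |stdCDF x| ≤ 1 := by
  rw [stdCDF_eq_cdf, abs_of_nonneg (cdf_nonneg _ x)]
  exact cdf_le_one _ x

noncomputable def postVar (σ : ℝ) : ℝ≥0 := (1 / (1 + σ ^ 2) * σ ^ 2).toNNReal

lemma postVar_ne_zero {σ : ℝ} (hσ : σ ≠ 0) : postVar σ ≠ 0 := by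
  rw [postVar, Ne, Real.toNNReal_eq_zero, not_le]
  positivity

lemma postPDF_eq_gaussianPDFReal (σ τ : ℝ) :
    postPDF σ τ = gaussianPDFReal (1 / (1 + σ ^ 2) * τ) (postVar σ) := by
  ext θ
  have hv : (0 : ℝ) ≤ 1 / (1 + σ ^ 2) * σ ^ 2 := by positivity
  rw [postPDF, stdPDF, gaussianPDFReal, postVar, Real.coe_toNNReal _ hv]
  generalize 1 / (1 + σ ^ 2) * σ ^ 2 = v at hv ⊢
  rw [div_pow, Real.sq_sqrt hv, mul_comm (2 * Real.pi), Real.sqrt_mul hv, mul_inv]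
  ring_nf

section Gaussian

variable {E : Type*} [NormedAddCommGroup E] {μ : ℝ} {v : ℝ≥0}

lemma setIntegral_gaussianReal_eq_setIntegral_smul [NormedSpace ℝ E] (hv : v ≠ 0) (g : ℝ → E)
    {s : Set ℝ} (hs : MeasurableSet s) :
    ∫ x in s, g x ∂gaussianReal μ v = ∫ x in s, gaussianPDFReal μ v x • g x := by
  rw [gaussianReal_of_var_ne_zero _ hv, setIntegral_withDensity_eq_setIntegral_toReal_smul
    (measurable_gaussianPDF μ v) (ae_of_all _ fun _ => gaussianPDF_lt_top) g hs]
  simp_rw [toReal_gaussianPDF]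

lemma gaussianReal_eq_map_addRight (μ : ℝ) (v : ℝ≥0) :
    gaussianReal μ v = (gaussianReal 0 v).map (MeasurableEquiv.addRight μ) := by
  rw [MeasurableEquiv.coe_addRight, gaussianReal_map_add_const, zero_add]

lemma integral_gaussianReal_eq_integral_add [NormedSpace ℝ E] (g : ℝ → E) :
    ∫ θ, g θ ∂gaussianReal μ v = ∫ x, g (x + μ) ∂gaussianReal 0 v := by
  rw [gaussianReal_eq_map_addRight, integral_map_equiv]
  rfl

lemma integrable_gaussianReal_iff_comp_add {g : ℝ → E} :
    Integrable g (gaussianReal μ v) ↔ Integrable (fun x => g (x + μ)) (gaussianReal 0 v) := by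
  rw [gaussianReal_eq_map_addRight, integrable_map_equiv]
  rfl

end Gaussian

lemma integral_lt_integral_of_ae_le_of_measure_setOf_lt_ne_zero {α : Type*} [MeasurableSpace α]
    {μ : Measure α} {f g : α → ℝ} (hf : Integrable f μ) (hg : Integrable g μ)
    (hle : f ≤ᵐ[μ] g) (hlt : μ {x | f x < g x} ≠ 0) : ∫ x, f x ∂μ < ∫ x, g x ∂μ := by
  rw [← sub_pos, ← integral_sub hg hf, integral_pos_iff_support_of_nonneg_ae
    (hle.mono fun x => sub_nonneg.2) (hg.sub hf)]
  exact pos_iff_ne_zero.2 (mt (measure_mono_null fun x hx => (sub_pos.2 hx).ne') hlt)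

noncomputable def Δ₂Integrand (σ γ τ θ : ℝ) : ℝ :=
  if θ ≤ 1 then (1 - γ) * (1 - θ) else stdCDF ((τ - θ) / σ) - θ

lemma measurable_Δ₂Integrand (σ γ τ : ℝ) : Measurable (Δ₂Integrand σ γ τ) :=
  Measurable.ite measurableSet_Iic (by fun_prop)
    ((measurable_stdCDF.comp (by fun_prop)).sub measurable_id)

lemma abs_Δ₂Integrand_le (σ γ τ θ : ℝ) :
    |Δ₂Integrand σ γ τ θ| ≤ (|1 - γ| + 1) * (1 + |θ|) := by
  have hθ : |1 - θ| ≤ 1 + |θ| := (abs_sub _ _).trans_eq (by rw [abs_one])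
  unfold Δ₂Integrand
  split_ifs
  · rw [abs_mul]
    nlinarith [abs_nonneg (1 - γ), abs_nonneg θ]
  · nlinarith [abs_sub (stdCDF ((τ - θ) / σ)) θ, abs_stdCDF_le_one ((τ - θ) / σ),
      abs_nonneg (1 - γ), abs_nonneg θ]

lemma integrable_Δ₂Integrand (σ γ τ μ : ℝ) (v : ℝ≥0) :
    Integrable (Δ₂Integrand σ γ τ) (gaussianReal μ v) := by
  have hid : Integrable (fun θ : ℝ => θ) (gaussianReal μ v) :=
    (memLp_id_gaussianReal 1).integrable le_rfl
  refine Integrable.mono' (((integrable_const 1).add hid.abs).const_mul (|1 - γ| + 1))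
    (measurable_Δ₂Integrand σ γ τ).aestronglyMeasurable (ae_of_all _ fun θ => ?_)
  exact (Real.norm_eq_abs _).trans_le (abs_Δ₂Integrand_le σ γ τ θ)

lemma Δ₂_eq_integral_gaussianReal {σ : ℝ} (hσ : σ ≠ 0) (γ τ : ℝ) :
    Δ₂ σ γ τ = ∫ θ, Δ₂Integrand σ γ τ θ ∂gaussianReal (1 / (1 + σ ^ 2) * τ) (postVar σ) := by
  have hv := postVar_ne_zero hσ
  have hint := integrable_Δ₂Integrand σ γ τ (1 / (1 + σ ^ 2) * τ) (postVar σ)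
  rw [← intervalIntegral.integral_Iic_add_Ioi (b := 1) hint.integrableOn hint.integrableOn,
    setIntegral_gaussianReal_eq_setIntegral_smul hv _ measurableSet_Iic,
    setIntegral_gaussianReal_eq_setIntegral_smul hv _ measurableSet_Ioi,
    ← postPDF_eq_gaussianPDFReal, Δ₂]
  congr 1
  · refine setIntegral_congr_fun measurableSet_Iic fun θ (hθ : θ ≤ 1) => ?_
    rw [Δ₂Integrand, if_pos hθ, smul_eq_mul, mul_comm]
  · refine setIntegral_congr_fun measurableSet_Ioi fun θ (hθ : 1 < θ) => ?_
    rw [Δ₂Integrand, if_neg hθ.not_ge, smul_eq_mul, mul_comm]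

lemma Δ₂Integrand_antitone_gamma (σ τ θ : ℝ) : Antitone fun γ => Δ₂Integrand σ γ τ θ := by
  intro γ₁ γ₂ h
  simp only [Δ₂Integrand]
  split_ifs with hθ
  · nlinarith
  · exact le_rfl

lemma Δ₂Integrand_strictAnti_gamma (σ τ : ℝ) {θ : ℝ} (hθ : θ < 1) :
    StrictAnti fun γ => Δ₂Integrand σ γ τ θ := by
  intro γ₁ γ₂ h
  simp only [Δ₂Integrand, if_pos hθ.le]
  nlinarith

lemma stdCDF_sub_strictAnti {σ : ℝ} (hσ : 0 < σ) (hσ' : σ ^ 2 < 2 * Real.pi) (x : ℝ) :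
    StrictAnti fun τ =>
      stdCDF ((τ - (x + 1 / (1 + σ ^ 2) * τ)) / σ) - (x + 1 / (1 + σ ^ 2) * τ) := by
  intro τ₁ τ₂ h
  beta_reduce
  set α := 1 / (1 + σ ^ 2) with hα_def
  set z₁ := (τ₁ - (x + α * τ₁)) / σ
  set z₂ := (τ₂ - (x + α * τ₂)) / σ
  have hstep : 0 < α * (τ₂ - τ₁) := mul_pos (by positivity) (sub_pos.2 h)
  have hz : z₂ - z₁ = σ * (α * (τ₂ - τ₁)) := by
    simp only [z₁, z₂, hα_def]
    field_simp
    ring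
  have hlip : stdCDF z₂ - stdCDF z₁ ≤ σ / √(2 * Real.pi) * (α * (τ₂ - τ₁)) := by
    have := stdCDF_sub_le (a := z₁) (b := z₂) (by nlinarith)
    rwa [hz, mul_div_right_comm] at this
  have hslope : σ / √(2 * Real.pi) < 1 :=
    (div_lt_one (by positivity)).2 ((Real.lt_sqrt hσ.le).2 hσ')
  nlinarith

lemma Δ₂Integrand_add_lt {σ γ : ℝ} (hσ : 0 < σ) (hσ' : σ ^ 2 < 2 * Real.pi) (hγ : γ < 1)
    (x : ℝ) {τ₁ τ₂ : ℝ} (h : τ₁ < τ₂) :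
    Δ₂Integrand σ γ τ₂ (x + 1 / (1 + σ ^ 2) * τ₂) <
      Δ₂Integrand σ γ τ₁ (x + 1 / (1 + σ ^ 2) * τ₁) := by
  have hθ : x + 1 / (1 + σ ^ 2) * τ₁ < x + 1 / (1 + σ ^ 2) * τ₂ := by gcongr
  unfold Δ₂Integrand
  split_ifs with h₂ h₁ h₁
  · nlinarith
  · exact absurd (hθ.le.trans h₂) h₁
  · nlinarith [(abs_le.1 (abs_stdCDF_le_one ((τ₂ - (x + 1 / (1 + σ ^ 2) * τ₂)) / σ))).2]
  · exact stdCDF_sub_strictAnti hσ hσ' x h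

lemma Δ₂_eq_integral_add {σ : ℝ} (hσ : σ ≠ 0) (γ τ : ℝ) :
    Δ₂ σ γ τ = ∫ x, Δ₂Integrand σ γ τ (x + 1 / (1 + σ ^ 2) * τ) ∂gaussianReal 0 (postVar σ) := by
  rw [Δ₂_eq_integral_gaussianReal hσ, integral_gaussianReal_eq_integral_add]

lemma Δ₂_strictAnti {σ γ : ℝ} (hσ : 0 < σ) (hσ' : σ ^ 2 < 2 * Real.pi) (hγ : γ < 1) :
    StrictAnti (Δ₂ σ γ) := by
  intro τ₁ τ₂ h
  have hint (τ : ℝ) := integrable_gaussianReal_iff_comp_add.1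
    (integrable_Δ₂Integrand σ γ τ (1 / (1 + σ ^ 2) * τ) (postVar σ))
  have hlt (x : ℝ) := Δ₂Integrand_add_lt hσ hσ' hγ x h
  simp only [Δ₂_eq_integral_add hσ.ne']
  refine integral_lt_integral_of_ae_le_of_measure_setOf_lt_ne_zero (hint τ₂) (hint τ₁)
    (ae_of_all _ fun x => (hlt x).le) ?_
  simp only [hlt, ofPred_true]
  exact NeZero.ne _

lemma Δ₂_strictAnti_gamma {σ : ℝ} (hσ : σ ≠ 0) (τ : ℝ) : StrictAnti fun γ => Δ₂ σ γ τ := by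
  intro γ₁ γ₂ h
  simp only [Δ₂_eq_integral_gaussianReal hσ]
  refine integral_lt_integral_of_ae_le_of_measure_setOf_lt_ne_zero
    (integrable_Δ₂Integrand ..) (integrable_Δ₂Integrand ..)
    (ae_of_all _ fun θ => Δ₂Integrand_antitone_gamma σ τ θ h.le) fun h0 => ?_
  have hsub : Iio 1 ⊆ {θ | Δ₂Integrand σ γ₂ τ θ < Δ₂Integrand σ γ₁ τ θ} :=
    fun θ hθ => Δ₂Integrand_strictAnti_gamma σ τ hθ h
  have := gaussianReal_absolutelyContinuous' _ (postVar_ne_zero hσ) (measure_mono_null hsub h0)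
  simp at this

/-- If σ² < 2π, the equilibrium threshold τ*(γ), defined by Δ(τ*(γ),γ) = 0, is strictly
decreasing in γ on (0,1). -/
theorem stmt9 (σ : ℝ) (hσ : 0 < σ) (hσ' : σ ^ 2 < 2 * Real.pi)
    (τstar : ℝ → ℝ) (hroot : ∀ γ ∈ Set.Ioo (0 : ℝ) 1, Δ₂ σ γ (τstar γ) = 0) :
    StrictAntiOn τstar (Set.Ioo (0 : ℝ) 1) := by
  intro γ₁ hγ₁ γ₂ hγ₂ h
  by_contra! hle
  have hγ : Δ₂ σ γ₂ (τstar γ₁) < Δ₂ σ γ₁ (τstar γ₁) := Δ₂_strictAnti_gamma hσ.ne' _ h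
  have hτ : Δ₂ σ γ₂ (τstar γ₂) ≤ Δ₂ σ γ₂ (τstar γ₁) := (Δ₂_strictAnti hσ hσ' hγ₂.2).antitone hle
  linarith [hroot γ₁ hγ₁, hroot γ₂ hγ₂]
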